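/- arXiv:2310.06780 — 2 statements merged into one kernel-verified Lean document; each statement's English description precedes it below -/
import Mathlib

section
/- Let ν > 0 be a real number, define s_1 = 4 and s_{k+1} = ⌊10^{ν s_k}⌋·s_k + 1 for k ≥ 1, and set ξ := Σ_{n≥1} 10^{−s_n}. Then for every ε > 0, ξ does not admit approximation exponent ν + ε. -/
/-!
Write `t n = s (n + 1)`, so `ξ = ∑ 10 ^ (-t n)`. The partial sum `T n` up to index `n` is
`A / 10 ^ t n` with `A ≡ 1 [MOD 10]`, and `10 ^ (-t (n + 1)) ≤ ξ - T n ≤ 2 · 10 ^ (-t (n + 1))`.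
Given `|ξ - p / q| < q ^ (-W)`, take the first `n` with `4 q 10 ^ t n ≤ 10 ^ t (n + 1)`.
If `p / q = T n`, then `10 ^ t n ∣ q`, and `q ^ W < 10 ^ t (n + 1)` with
`t (n + 1) ≤ 10 ^ (ν t n) t n + 1` gives `W < q ^ ν + 1`.
Otherwise `|ξ - p / q| ≥ 1 / (2 q 10 ^ t n)`. Since the floor in the recursion is eventually
`≥ 2`, we have `2 t n ≤ t (n + 1) + K`, which together with the minimality of `n` gives
`10 ^ t n ≤ 16 · 10 ^ K q ^ 2`; hence `q ^ W < 32 · 10 ^ K q ^ 3` and `W` is bounded.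
Either way `W = O(q ^ ν)`, so `W / q ^ (ν + ε)` cannot tend to infinity.
-/

open Filter

/-- `ξ` admits approximation exponent `ν`. -/
def AdmitsExponent (ξ ν : ℝ) : Prop :=
  ∃ (p q : ℕ → ℤ) (ω : ℕ → ℝ),
    (∀ k, 1 < q k) ∧ (∀ k, 0 < ω k) ∧
    (∀ k, 0 < |ξ - (p k : ℝ) / (q k : ℝ)| ∧
      |ξ - (p k : ℝ) / (q k : ℝ)| < (q k : ℝ) ^ (-(ω k))) ∧
    Tendsto (fun k => ω k / (q k : ℝ) ^ ν) atTop atTop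

open Finset Real

noncomputable def lacunarySum (t : ℕ → ℕ) : ℝ := ∑' n, 1 / (10 : ℝ) ^ t n

noncomputable def lacunaryPartialSum (t : ℕ → ℕ) (n : ℕ) : ℝ :=
  ∑ i ∈ range (n + 1), 1 / (10 : ℝ) ^ t i

lemma one_div_mul_le_abs_div_sub_div {a c : ℤ} {b d : ℕ} (hb : 0 < b) (hd : 0 < d)
    (h : (a : ℝ) / b ≠ c / d) : 1 / ((b : ℝ) * d) ≤ |(a : ℝ) / b - c / d| := by
  have hN : a * d - b * c ≠ 0 := by
    contrapose! h
    rw [div_eq_div_iff (by positivity) (by positivity)]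
    exact_mod_cast (by linear_combination h : a * d = c * b)
  rw [div_sub_div _ _ (by positivity) (by positivity), abs_div,
    abs_of_pos (by positivity : (0 : ℝ) < b * d)]
  gcongr
  exact_mod_cast Int.one_le_abs hN

lemma ten_pow_dvd_of_div_eq {p q : ℤ} {A m : ℕ} (hA : A % 10 = 1) (hq : q ≠ 0)
    (h : (p : ℝ) / q = A / (10 : ℝ) ^ m) : (10 : ℤ) ^ m ∣ q := by
  have hcop : IsCoprime ((10 : ℤ) ^ m) A := by
    refine IsCoprime.pow_left ⟨-((A / 10 : ℕ) : ℤ), 1, ?_⟩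
    have := Nat.div_add_mod A 10
    omega
  refine hcop.dvd_of_dvd_mul_right ⟨p, ?_⟩
  rw [div_eq_div_iff (by exact_mod_cast hq) (by positivity)] at h
  exact_mod_cast (by linear_combination -h : (q : ℝ) * A = 10 ^ m * p)

lemma rpow_lt_one_div_of_le_of_lt_rpow_neg {q W d x : ℝ} (hq : 0 < q) (hd : 0 < d)
    (hdx : d ≤ x) (hx : x < q ^ (-W)) : q ^ W < 1 / d := by
  rw [rpow_neg hq.le, ← one_div] at hx
  exact (lt_one_div hd (by positivity)).1 (hdx.trans_lt hx)

lemma lt_rpow_add_one_of_rpow_lt {ν W q : ℝ} {m m' : ℕ} (hν : 0 ≤ ν) (hW : 0 ≤ W) (hm : 0 < m)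
    (hm' : (m' : ℝ) ≤ (10 : ℝ) ^ (ν * m) * m + 1) (hq : (10 : ℝ) ^ m ≤ q)
    (h : q ^ W < (10 : ℝ) ^ m') : W < q ^ ν + 1 := by
  have h10 : (10 : ℝ) ^ ((m : ℝ) * W) < 10 ^ (m' : ℝ) := by
    rw [rpow_mul (by norm_num), rpow_natCast, rpow_natCast]
    exact (rpow_le_rpow (by positivity) hq hW).trans_lt h
  have hmW : m * W < m' := (rpow_lt_rpow_left_iff (by norm_num)).1 h10
  have hpow : (10 : ℝ) ^ (ν * m) ≤ q ^ ν := by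
    rw [mul_comm, rpow_mul (by norm_num), rpow_natCast]
    exact rpow_le_rpow (by positivity) hq hν
  have hm1 : (1 : ℝ) ≤ m := by exact_mod_cast hm
  have : (m : ℝ) * W < m * (q ^ ν + 1) := by nlinarith
  exact lt_of_mul_lt_mul_left this (by positivity)

lemma lt_add_logb_of_rpow_lt {q W c a : ℝ} (hq : 2 ≤ q) (hc : 1 ≤ c) (h : q ^ W < c * q ^ a) :
    W < a + logb 2 c := by
  by_contra! hle
  have hlog : 0 ≤ logb 2 c := logb_nonneg (by norm_num) hc
  have : c * q ^ a ≤ q ^ W := calc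
    c * q ^ a = (2 : ℝ) ^ logb 2 c * q ^ a := by
      rw [rpow_logb (by norm_num) (by norm_num) (by linarith)]
    _ ≤ q ^ logb 2 c * q ^ a := by gcongr
    _ = q ^ (a + logb 2 c) := by rw [rpow_add (by linarith)]; ring
    _ ≤ q ^ W := rpow_le_rpow_of_exponent_le (by linarith) hle
  linarith

lemma not_admitsExponent_of_le_mul_rpow {ξ ν ε C : ℝ} (hε : 0 ≤ ε)
    (h : ∀ (p q : ℤ) (W : ℝ), 1 < q → 0 < W → |ξ - p / q| < (q : ℝ) ^ (-W) →
      W ≤ C * (q : ℝ) ^ ν) :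
    ¬ AdmitsExponent ξ (ν + ε) := by
  rintro ⟨p, q, ω, hq, hω, happrox, htend⟩
  obtain ⟨k, hk⟩ := (htend.eventually_gt_atTop C).exists
  have hq1 : (1 : ℝ) < q k := by exact_mod_cast hq k
  have hbound : ω k / (q k : ℝ) ^ ν ≤ C :=
    (div_le_iff₀ (by positivity)).2 (h _ _ _ (hq k) (hω k) (happrox k).2)
  have hmono : ω k / (q k : ℝ) ^ (ν + ε) ≤ ω k / (q k : ℝ) ^ ν :=
    div_le_div_of_nonneg_left (hω k).le (by positivity)
      (rpow_le_rpow_of_exponent_le hq1.le (by linarith))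
  linarith

section Lacunary

variable {t : ℕ → ℕ}

lemma summable_one_div_ten_pow (ht : StrictMono t) : Summable fun n => 1 / (10 : ℝ) ^ t n := by
  refine (summable_geometric_of_lt_one (r := 1 / 10) (by norm_num) (by norm_num)).of_nonneg_of_le
    (fun n => by positivity) fun n => ?_
  rw [one_div_pow]
  exact one_div_pow_le_one_div_pow_of_le (by norm_num) (ht.id_le n)

lemma lacunarySum_sub_lacunaryPartialSum (ht : StrictMono t) (n : ℕ) :
    lacunarySum t - lacunaryPartialSum t n = ∑' i, 1 / (10 : ℝ) ^ t (i + (n + 1)) := by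
  rw [lacunarySum, lacunaryPartialSum,
    ← (summable_one_div_ten_pow ht).sum_add_tsum_nat_add (n + 1)]
  ring

lemma one_div_ten_pow_le_lacunarySum_sub (ht : StrictMono t) (n : ℕ) :
    1 / (10 : ℝ) ^ t (n + 1) ≤ lacunarySum t - lacunaryPartialSum t n := by
  rw [lacunarySum_sub_lacunaryPartialSum ht]
  have hs := (summable_nat_add_iff (n + 1)).2 (summable_one_div_ten_pow ht)
  simpa using hs.le_tsum 0 fun j _ => by positivity

lemma lacunarySum_sub_le (ht : StrictMono t) (n : ℕ) :
    lacunarySum t - lacunaryPartialSum t n ≤ 2 / (10 : ℝ) ^ t (n + 1) := by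
  have hterm (i : ℕ) :
      1 / (10 : ℝ) ^ t (i + (n + 1)) ≤ (1 / 10 : ℝ) ^ i * (1 / 10 ^ t (n + 1)) := calc
    1 / (10 : ℝ) ^ t (i + (n + 1)) ≤ 1 / 10 ^ (i + t (n + 1)) :=
      one_div_pow_le_one_div_pow_of_le (by norm_num) (ht.add_le_nat i (n + 1))
    _ = (1 / 10 : ℝ) ^ i * (1 / 10 ^ t (n + 1)) := by rw [pow_add, one_div_pow]; field_simp
  rw [lacunarySum_sub_lacunaryPartialSum ht]
  calc ∑' i, 1 / (10 : ℝ) ^ t (i + (n + 1))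
      ≤ ∑' i, (1 / 10 : ℝ) ^ i * (1 / 10 ^ t (n + 1)) :=
        Summable.tsum_le_tsum hterm ((summable_nat_add_iff (n + 1)).2 (summable_one_div_ten_pow ht))
          ((summable_geometric_of_lt_one (by norm_num) (by norm_num)).mul_right _)
    _ = 10 / 9 * (1 / 10 ^ t (n + 1)) := by
        rw [tsum_mul_right, tsum_geometric_of_lt_one (by norm_num) (by norm_num)]
        norm_num
    _ ≤ 2 / 10 ^ t (n + 1) := by rw [div_eq_mul_one_div 2]; gcongr; norm_num

lemma exists_lacunaryPartialSum_eq (ht : StrictMono t) (n : ℕ) :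
    ∃ A : ℕ, A % 10 = 1 ∧ lacunaryPartialSum t n = A / (10 : ℝ) ^ t n := by
  induction n with
  | zero => exact ⟨1, rfl, by simp [lacunaryPartialSum]⟩
  | succ n ih =>
    obtain ⟨A, hA, hsum⟩ := ih
    obtain ⟨d, hd⟩ : ∃ d, t (n + 1) = t n + (d + 1) := ⟨t (n + 1) - t n - 1, by
      have : t n < t (n + 1) := ht (by omega); omega⟩
    refine ⟨A * 10 ^ (d + 1) + 1, ?_, ?_⟩
    · rw [pow_succ, ← mul_assoc]
      omega
    · rw [lacunaryPartialSum, sum_range_succ, ← lacunaryPartialSum, hsum, hd, pow_add]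
      push_cast
      field_simp

lemma one_div_two_mul_le_abs_lacunarySum_sub (ht : StrictMono t) {p : ℤ} {q n : ℕ} (hq : 0 < q)
    (hn : 4 * q * 10 ^ t n ≤ 10 ^ t (n + 1)) (hne : (p : ℝ) / q ≠ lacunaryPartialSum t n) :
    1 / (2 * q * (10 : ℝ) ^ t n) ≤ |lacunarySum t - p / q| := by
  obtain ⟨A, -, hA⟩ := exists_lacunaryPartialSum_eq ht n
  have hsep := one_div_mul_le_abs_div_sub_div (c := A) (d := 10 ^ t n) hq (by positivity)
    (by push_cast; rwa [← hA])
  push_cast at hsep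
  rw [← hA] at hsep
  have hnR : 4 * (q : ℝ) * 10 ^ t n ≤ 10 ^ t (n + 1) := by exact_mod_cast hn
  have htail : lacunarySum t - lacunaryPartialSum t n ≤ 1 / (2 * q * 10 ^ t n) :=
    (lacunarySum_sub_le ht n).trans <| by
      rw [div_le_div_iff₀ (by positivity) (by positivity)]
      linarith
  have htri := abs_sub_le ((p : ℝ) / q) (lacunarySum t) (lacunaryPartialSum t n)
  rw [abs_sub_comm ((p : ℝ) / q) (lacunarySum t),
    abs_of_nonneg ((one_div_ten_pow_le_lacunarySum_sub ht n).trans' (by positivity))] at htri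
  have hhalf : 1 / ((q : ℝ) * 10 ^ t n) = 2 * (1 / (2 * q * 10 ^ t n)) := by field_simp
  linarith

lemma ten_pow_le_of_div_eq_lacunaryPartialSum (ht : StrictMono t) {p : ℤ} {q n : ℕ} (hq : 0 < q)
    (h : (p : ℝ) / q = lacunaryPartialSum t n) : 10 ^ t n ≤ q := by
  obtain ⟨A, hA10, hA⟩ := exists_lacunaryPartialSum_eq ht n
  have hdvd := ten_pow_dvd_of_div_eq (q := q) hA10 (by positivity) (by exact_mod_cast h.trans hA)
  exact Nat.le_of_dvd hq (by exact_mod_cast hdvd)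

lemma exists_mul_ten_pow_le (ht : StrictMono t) {K : ℕ} (hK : ∀ n, 2 * t n ≤ t (n + 1) + K)
    (Q : ℕ) : ∃ n, Q * 10 ^ t n ≤ 10 ^ t (n + 1) := by
  refine ⟨K + Q, ?_⟩
  have h1 : K + Q ≤ t (K + Q) := ht.id_le _
  have h2 : Q < 10 ^ Q := Nat.lt_pow_self (by norm_num)
  calc Q * 10 ^ t (K + Q) ≤ 10 ^ Q * 10 ^ t (K + Q) := by gcongr
    _ = 10 ^ (Q + t (K + Q)) := by rw [pow_add]
    _ ≤ 10 ^ t (K + Q + 1) := Nat.pow_le_pow_right (by norm_num) (by have := hK (K + Q); omega)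

lemma exists_first_mul_ten_pow_le (ht : StrictMono t) {K : ℕ}
    (hK : ∀ n, 2 * t n ≤ t (n + 1) + K) (Q : ℕ) :
    ∃ n, Q * 10 ^ t n ≤ 10 ^ t (n + 1) ∧ ∀ m < n, 10 ^ t (m + 1) < Q * 10 ^ t m := by
  classical
  have hex := exists_mul_ten_pow_le ht hK Q
  exact ⟨Nat.find hex, Nat.find_spec hex, fun m hm => not_le.1 (Nat.find_min hex hm)⟩

lemma ten_pow_le_sq_mul_of_forall_lt {K : ℕ} (hK : ∀ n, 2 * t n ≤ t (n + 1) + K) (h0 : t 0 ≤ K)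
    {Q n : ℕ} (hQ : 0 < Q) (hmin : ∀ m < n, 10 ^ t (m + 1) < Q * 10 ^ t m) :
    10 ^ t n ≤ Q ^ 2 * 10 ^ K := by
  cases n with
  | zero => calc
      10 ^ t 0 ≤ 10 ^ K := Nat.pow_le_pow_right (by norm_num) h0
      _ ≤ Q ^ 2 * 10 ^ K := Nat.le_mul_of_pos_left _ (by positivity)
  | succ m =>
    have hsq : 10 ^ t (m + 1) * 10 ^ t (m + 1) < Q ^ 2 * 10 ^ K * 10 ^ t (m + 1) := calc
      10 ^ t (m + 1) * 10 ^ t (m + 1) < Q * 10 ^ t m * (Q * 10 ^ t m) :=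
        Nat.mul_self_lt_mul_self (hmin m m.lt_succ_self)
      _ = Q ^ 2 * 10 ^ (2 * t m) := by ring
      _ ≤ Q ^ 2 * 10 ^ (t (m + 1) + K) :=
        Nat.mul_le_mul_left _ (Nat.pow_le_pow_right (by norm_num) (hK m))
      _ = Q ^ 2 * 10 ^ K * 10 ^ t (m + 1) := by ring
    exact (Nat.lt_of_mul_lt_mul_right hsq).le

lemma lt_rpow_add_one_of_eq_lacunaryPartialSum {ν W : ℝ} (ht : StrictMono t) (hν : 0 ≤ ν)
    (hW : 0 ≤ W) {p : ℤ} {q n : ℕ} (hq : 0 < q) (hn : 0 < t n)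
    (hgrowth : (t (n + 1) : ℝ) ≤ (10 : ℝ) ^ (ν * t n) * t n + 1)
    (hT : (p : ℝ) / q = lacunaryPartialSum t n) (hlt : |lacunarySum t - p / q| < (q : ℝ) ^ (-W)) :
    W < (q : ℝ) ^ ν + 1 := by
  have hlow : 1 / (10 : ℝ) ^ t (n + 1) ≤ |lacunarySum t - p / q| := by
    rw [hT]
    exact (one_div_ten_pow_le_lacunarySum_sub ht n).trans (le_abs_self _)
  have hqW := rpow_lt_one_div_of_le_of_lt_rpow_neg (by positivity) (by positivity) hlow hlt
  rw [one_div_one_div] at hqW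
  have hten : (10 : ℝ) ^ t n ≤ q := by
    exact_mod_cast ten_pow_le_of_div_eq_lacunaryPartialSum ht hq hT
  exact lt_rpow_add_one_of_rpow_lt hν hW hn hgrowth hten hqW

lemma lt_add_logb_of_ne_lacunaryPartialSum {W : ℝ} {K : ℕ} (ht : StrictMono t)
    (hK : ∀ n, 2 * t n ≤ t (n + 1) + K) (h0 : t 0 ≤ K) {p : ℤ} {q n : ℕ} (hq : 2 ≤ q)
    (hn : 4 * q * 10 ^ t n ≤ 10 ^ t (n + 1)) (hmin : ∀ m < n, 10 ^ t (m + 1) < 4 * q * 10 ^ t m)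
    (hT : (p : ℝ) / q ≠ lacunaryPartialSum t n) (hlt : |lacunarySum t - p / q| < (q : ℝ) ^ (-W)) :
    W < 3 + logb 2 (32 * 10 ^ K) := by
  have hlow := one_div_two_mul_le_abs_lacunarySum_sub ht (by omega) hn hT
  have hqW := rpow_lt_one_div_of_le_of_lt_rpow_neg (by positivity) (by positivity) hlow hlt
  have hten : (10 : ℝ) ^ t n ≤ 16 * 10 ^ K * q ^ 2 := by
    have := ten_pow_le_sq_mul_of_forall_lt hK h0 (by omega) hmin
    exact_mod_cast (by linarith : 10 ^ t n ≤ 16 * 10 ^ K * q ^ 2)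
  have hqW' : (q : ℝ) ^ W < 32 * 10 ^ K * (q : ℝ) ^ (3 : ℝ) := calc
    (q : ℝ) ^ W < 2 * q * 10 ^ t n := by rwa [one_div_one_div] at hqW
    _ ≤ 2 * q * (16 * 10 ^ K * q ^ 2) := by gcongr
    _ = 32 * 10 ^ K * (q : ℝ) ^ (3 : ℝ) := by
      rw [show (3 : ℝ) = (3 : ℕ) by norm_num, rpow_natCast]; ring
  exact lt_add_logb_of_rpow_lt (by exact_mod_cast hq)
    (one_le_mul_of_one_le_of_one_le (by norm_num) (one_le_pow₀ (by norm_num))) hqW'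

theorem le_mul_rpow_of_abs_lacunarySum_sub_lt {ν : ℝ} {K : ℕ} (ht : StrictMono t)
    (ht0 : 0 < t 0) (hK : ∀ n, 2 * t n ≤ t (n + 1) + K) (h0 : t 0 ≤ K)
    (hgrowth : ∀ n, (t (n + 1) : ℝ) ≤ (10 : ℝ) ^ (ν * t n) * t n + 1) (hν : 0 ≤ ν)
    {p q : ℤ} {W : ℝ} (hq : 1 < q) (hW : 0 < W)
    (hlt : |lacunarySum t - p / q| < (q : ℝ) ^ (-W)) :
    W ≤ max 2 (3 + logb 2 (32 * 10 ^ K)) * (q : ℝ) ^ ν := by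
  lift q to ℕ using by omega
  have hqν : 1 ≤ (q : ℝ) ^ ν := one_le_rpow (by exact_mod_cast hq.le) hν
  push_cast at hlt ⊢
  obtain ⟨n, hn, hmin⟩ := exists_first_mul_ten_pow_le ht hK (4 * q)
  by_cases hT : (p : ℝ) / q = lacunaryPartialSum t n
  · have := lt_rpow_add_one_of_eq_lacunaryPartialSum ht hν hW.le (by omega)
      (ht0.trans_le (ht.monotone n.zero_le)) (hgrowth n) hT hlt
    calc W ≤ 2 * (q : ℝ) ^ ν := by linarith
      _ ≤ _ := by gcongr; exact le_max_left _ _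
  · have := lt_add_logb_of_ne_lacunaryPartialSum ht hK h0 (by omega) hn hmin hT hlt
    calc W ≤ max 2 (3 + logb 2 (32 * 10 ^ K)) := this.le.trans (le_max_right _ _)
      _ ≤ _ := le_mul_of_one_le_right (by positivity) hqν

end Lacunary

section Recursion

variable {ν : ℝ} {s : ℕ → ℕ}

lemma one_le_floor_ten_rpow (hν : 0 ≤ ν) (m : ℕ) : 1 ≤ ⌊(10 : ℝ) ^ (ν * m)⌋₊ :=
  Nat.le_floor (by push_cast; exact one_le_rpow (by norm_num) (by positivity))

lemma eventually_two_le_floor_ten_rpow (hν : 0 < ν) :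
    ∀ᶠ m : ℕ in atTop, 2 ≤ ⌊(10 : ℝ) ^ (ν * m)⌋₊ := by
  have hlim : Tendsto (fun m : ℕ => ((10 : ℝ) ^ ν) ^ m) atTop atTop :=
    tendsto_pow_atTop_atTop_of_one_lt (one_lt_rpow (by norm_num) hν)
  filter_upwards [hlim.eventually_ge_atTop 2] with m hm
  exact Nat.le_floor (by rw [rpow_mul (by norm_num), rpow_natCast]; exact_mod_cast hm)

variable (hsrec : ∀ k, 1 ≤ k → s (k + 1) = ⌊(10 : ℝ) ^ (ν * (s k : ℝ))⌋₊ * s k + 1)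
include hsrec

lemma strictMono_comp_succ (hν : 0 ≤ ν) : StrictMono fun n => s (n + 1) :=
  strictMono_nat_of_lt_succ fun n => by
    rw [hsrec (n + 1) (by omega)]
    nlinarith [one_le_floor_ten_rpow hν (s (n + 1))]

lemma exists_two_mul_le_add (hν : 0 < ν) :
    ∃ K, s 1 ≤ K ∧ ∀ n, 2 * s (n + 1) ≤ s (n + 2) + K := by
  obtain ⟨K, hK⟩ := eventually_atTop.1 (eventually_two_le_floor_ten_rpow hν)
  refine ⟨max K (s 1), le_max_right _ _, fun n => ?_⟩
  rw [hsrec (n + 1) (by omega)]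
  by_cases h : K ≤ s (n + 1)
  · have := Nat.mul_le_mul_right (s (n + 1)) (hK _ h); omega
  · nlinarith [one_le_floor_ten_rpow hν.le (s (n + 1)), le_max_left K (s 1)]

lemma cast_succ_le_ten_rpow_mul_add_one (n : ℕ) :
    (s (n + 2) : ℝ) ≤ (10 : ℝ) ^ (ν * s (n + 1)) * s (n + 1) + 1 := by
  rw [hsrec (n + 1) (by omega)]
  push_cast
  gcongr
  exact Nat.floor_le (by positivity)

end Recursion

theorem not_admits_larger_exponent (ν : ℝ) (hν : 0 < ν) (s : ℕ → ℕ)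
    (hs1 : s 1 = 4)
    (hsrec : ∀ k, 1 ≤ k → s (k + 1) = ⌊(10 : ℝ) ^ (ν * (s k : ℝ))⌋₊ * s k + 1)
    (ε : ℝ) (hε : 0 < ε) :
    ¬ AdmitsExponent (∑' n : ℕ, 1 / (10 : ℝ) ^ s (n + 1)) (ν + ε) := by
  obtain ⟨K, hK0, hK⟩ := exists_two_mul_le_add hsrec hν
  exact not_admitsExponent_of_le_mul_rpow hε.le fun p q W hq hW hlt =>
    le_mul_rpow_of_abs_lacunarySum_sub_lt (strictMono_comp_succ hsrec hν.le) (by simp [hs1]) hK hK0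
      (cast_succ_le_ten_rpow_mul_add_one hsrec) hν.le hq hW hlt
end

section
/- Let (P, Q, R) be a ℤ-admissible triple of polynomials with R ≠ 0 as a polynomial, and let Ω := {z ∈ ℂ : P(z)·Q(z)·R(z) ≠ 0 and P(z) ≠ 1}. Then the function h̃ : Ω → ℂ given by h̃(z) = Q(z)^{R(z)}·Log(P(z)) (principal branch powers and logarithm) is non-constant on Ω; in particular, for every complex number γ the set {z ∈ Ω : h̃(z) = Log γ} has no accumulation point in Ω. -/
/-- A ℤ-admissible triple of polynomials. -/
def ZAdmissible (P Q R : Polynomial ℤ) : Prop :=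
  P ≠ 0 ∧ Q ≠ 0 ∧ P ≠ 1 ∧
  (P.natDegree = 0 → Q.natDegree ≠ 0 ∧ R ≠ 0) ∧
  (Q.natDegree = 0 → P.natDegree ≠ 0) ∧
  (P.natDegree = 0 ∧ Q.natDegree = 0 → R.natDegree ≠ 0)

/-- The domain `Ω = {z : P(z)Q(z)R(z) ≠ 0 and P(z) ≠ 1}`. -/
def OmegaSet (P Q R : Polynomial ℤ) : Set ℂ :=
  {z : ℂ | Polynomial.aeval z P * Polynomial.aeval z Q * Polynomial.aeval z R ≠ 0 ∧
    Polynomial.aeval z P ≠ 1}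

/-- The function `h̃(z) = Q(z)^{R(z)} · Log P(z)` (principal branch). -/
noncomputable def htilde (P Q R : Polynomial ℤ) (z : ℂ) : ℂ :=
  (Polynomial.aeval z Q : ℂ) ^ (Polynomial.aeval z R : ℂ) *
    Complex.log (Polynomial.aeval z P)

open Polynomial Complex Filter Topology
open scoped Real

/-!
Near a point `z₀` of `Ω` pick holomorphic branches `u`, `v` of `log Q` and `log P`. The principal
logarithms differ from them by `2πik` with `|k| ≤ 1`, so every value of `h̃` near `z₀` is a value
of one of nine holomorphic functions `exp (R (u + 2πim)) (v + 2πik)`. If a level set of `h̃`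
accumulated at `z₀`, one of these would be constant near `z₀` by the identity theorem.
Differentiating `exp (R u) v = c` gives `Q P R' u v + P R Q' v + Q P' = 0`, and differentiating
further eliminates one of `u`, `v` and leaves a relation `B w = A` between polynomials and a local
logarithm `w` of a nonconstant polynomial `S`, with `B ≠ 0`. That is impossible: `A / B` would be a
rational antiderivative of `S' / S`, which has a simple pole with nonzero residue at each root of
`S`. Non-constancy follows because `Ω` is a nonempty open set.
-/

theorem Polynomial.eq_zero_of_eventually_eval_eq_zero {R : Type*} [CommRing R] [IsDomain R]
    [TopologicalSpace R] [T1Space R] {x : R} [(𝓝[≠] x).NeBot] {p : R[X]}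
    (h : ∀ᶠ z in 𝓝 x, p.eval z = 0) : p = 0 :=
  p.eq_zero_of_infinite_isRoot (infinite_of_mem_nhds x h)

section Wronskian

variable {K : Type*} [Field K] [CharZero K]

theorem Polynomial.not_pow_rootMultiplicity_dvd_wronskian {A B : K[X]} {ζ : K} (hB0 : B ≠ 0)
    (hB : B.IsRoot ζ) (hA : ¬A.IsRoot ζ) :
    ¬(X - C ζ) ^ B.rootMultiplicity ζ ∣ wronskian B A := by
  intro hdvd
  have hB' : derivative B ≠ 0 := by
    intro h
    rw [eq_C_of_derivative_eq_zero h, IsRoot, eval_C] at hB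
    rw [eq_C_of_derivative_eq_zero h, hB, C_0] at hB0
    exact hB0 rfl
  have hA0 : A ≠ 0 := by rintro rfl; exact hA (by simp)
  have hne : derivative B * A ≠ 0 := mul_ne_zero hB' hA0
  have hdvd' : (X - C ζ) ^ B.rootMultiplicity ζ ∣ derivative B * A := by
    have := dvd_sub (dvd_mul_of_dvd_left (pow_rootMultiplicity_dvd B ζ) (derivative A)) hdvd
    rwa [wronskian, sub_sub_cancel] at this
  have hle := (le_rootMultiplicity_iff hne).2 hdvd'
  rw [rootMultiplicity_mul hne, derivative_rootMultiplicity_of_root hB,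
    rootMultiplicity_eq_zero hA] at hle
  have := (rootMultiplicity_pos hB0).2 hB
  omega

variable [IsAlgClosed K]

-- `S * wronskian B A = derivative S * B ^ 2` says `(A / B)' = S' / S`.
theorem Polynomial.mul_wronskian_ne_derivative_mul_sq_of_isCoprime {S A B : K[X]}
    (hS : S.natDegree ≠ 0) (hB : B ≠ 0) (hAB : IsCoprime A B) :
    S * wronskian B A ≠ derivative S * B ^ 2 := by
  intro h
  obtain ⟨ζ, hζ⟩ := IsAlgClosed.exists_root S fun h => hS (natDegree_eq_of_degree_eq_some h)
  have hS0 : S ≠ 0 := by rintro rfl; exact hS natDegree_zero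
  have hS' : derivative S ≠ 0 := fun h => hS (derivative_eq_zero.1 h)
  have hW : wronskian B A ≠ 0 := by
    intro hW
    rw [hW, mul_zero] at h
    exact mul_ne_zero hS' (pow_ne_zero 2 hB) h.symm
  have hmult := congrArg (rootMultiplicity ζ) h
  rw [rootMultiplicity_mul (mul_ne_zero hS0 hW),
    rootMultiplicity_mul (mul_ne_zero hS' (pow_ne_zero 2 hB)),
    derivative_rootMultiplicity_of_root hζ, pow_two, rootMultiplicity_mul (mul_ne_zero hB hB)]
    at hmult
  have hpos := (rootMultiplicity_pos hS0).2 hζ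
  by_cases hBζ : B.IsRoot ζ
  · have hAζ : ¬A.IsRoot ζ := by
      obtain ⟨a, b, hab⟩ := hAB
      intro hAζ
      simpa [IsRoot.def.1 hAζ, IsRoot.def.1 hBζ] using congrArg (eval ζ) hab
    refine not_pow_rootMultiplicity_dvd_wronskian hB hBζ hAζ
      ((pow_dvd_pow _ ?_).trans (pow_rootMultiplicity_dvd _ ζ))
    omega
  · rw [rootMultiplicity_eq_zero hBζ] at hmult
    omega

theorem Polynomial.mul_wronskian_ne_derivative_mul_sq {S A B : K[X]} (hS : S.natDegree ≠ 0)
    (hB : B ≠ 0) : S * wronskian B A ≠ derivative S * B ^ 2 := by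
  classical
  intro h
  set d := GCDMonoid.gcd A B
  have hd : d ≠ 0 := gcd_ne_zero_of_right hB
  have hAd : d * (A / d) = A := EuclideanDomain.mul_div_cancel' hd (gcd_dvd_left A B)
  have hBd : d * (B / d) = B := EuclideanDomain.mul_div_cancel' hd (gcd_dvd_right A B)
  refine mul_wronskian_ne_derivative_mul_sq_of_isCoprime hS (right_div_gcd_ne_zero (p := A) hB)
    (isCoprime_div_gcd_div_gcd (p := A) hB) (mul_left_cancel₀ (pow_ne_zero 2 hd) ?_)
  rw [← hAd, ← hBd] at h
  simp only [wronskian, derivative_mul] at h ⊢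
  linear_combination h

end Wronskian

section Calculus

variable {𝕜 F : Type*} [NontriviallyNormedField 𝕜] [NormedAddCommGroup F] [NormedSpace 𝕜 F]

theorem eventually_eq_zero_of_hasDerivAt {f f' : 𝕜 → F} {x : 𝕜} (hf : ∀ᶠ z in 𝓝 x, f z = 0)
    (hf' : ∀ᶠ z in 𝓝 x, HasDerivAt f (f' z) z) : ∀ᶠ z in 𝓝 x, f' z = 0 := by
  filter_upwards [hf.eventually_nhds, hf'] with z hz hd
  exact hd.unique ((hasDerivAt_const z 0).congr_of_eventuallyEq hz)

theorem eventually_eq_of_hasDerivAt_zero {𝕜 E : Type*} [RCLike 𝕜] [NormedAddCommGroup E]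
    [NormedSpace 𝕜 E] {f : 𝕜 → E} {x : 𝕜}
    (hf : ∀ᶠ z in 𝓝 x, HasDerivAt f 0 z) : ∀ᶠ z in 𝓝 x, f z = f x := by
  obtain ⟨ε, hε, hball⟩ := Metric.eventually_nhds_iff_ball.mp hf
  filter_upwards [Metric.ball_mem_nhds x hε] with z hz
  exact Metric.isOpen_ball.is_const_of_deriv_eq_zero (convex_ball x ε).isPreconnected
    (fun w hw => (hball w hw).differentiableAt.differentiableWithinAt)
    (fun w hw => (hball w hw).deriv) hz (Metric.mem_ball_self hε)

end Calculus

def IsLocalLog (u : ℂ → ℂ) (p : ℂ[X]) (z₀ : ℂ) : Prop :=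
  ∀ᶠ z in 𝓝 z₀, exp (u z) = p.eval z ∧ HasDerivAt u (p.derivative.eval z / p.eval z) z

namespace IsLocalLog

variable {u : ℂ → ℂ} {p : ℂ[X]} {z₀ : ℂ}

theorem eventually_eval_ne_zero (hu : IsLocalLog u p z₀) : ∀ᶠ z in 𝓝 z₀, p.eval z ≠ 0 :=
  hu.mono fun _ hz => hz.1 ▸ exp_ne_zero _

theorem add_int_mul_two_pi_I (hu : IsLocalLog u p z₀) (k : ℤ) :
    IsLocalLog (fun z => u z + k * (2 * π * I)) p z₀ :=
  hu.mono fun z hz => ⟨by rw [exp_add, exp_int_mul_two_pi_mul_I, mul_one, hz.1], hz.2.add_const _⟩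

theorem eventually_eq_of_derivative_eq_zero (hu : IsLocalLog u p z₀) (hp : derivative p = 0) :
    ∀ᶠ z in 𝓝 z₀, u z = u z₀ :=
  eventually_eq_of_hasDerivAt_zero <| hu.mono fun _ hz => by simpa [hp] using hz.2

theorem eq_zero_of_eventually_mul_eq (hu : IsLocalLog u p z₀) (hp : p.natDegree ≠ 0)
    {A B : ℂ[X]} (h : ∀ᶠ z in 𝓝 z₀, B.eval z * u z = A.eval z) : B = 0 ∧ A = 0 := by
  have hB : B = 0 := by
    by_contra hB
    refine mul_wronskian_ne_derivative_mul_sq (A := A) hp hB (sub_eq_zero.1 <|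
      eq_zero_of_eventually_eval_eq_zero (x := z₀) ?_)
    have hd := eventually_eq_zero_of_hasDerivAt (h.mono fun z hz => sub_eq_zero.2 hz) <|
      hu.mono fun z hz => ((B.hasDerivAt z).mul hz.2).sub (A.hasDerivAt z)
    filter_upwards [h, hd, hu.eventually_eval_ne_zero] with z h1 h2 hz
    simp only [wronskian, eval_sub, eval_mul, eval_pow]
    field_simp at h2
    linear_combination (p.eval z * B.derivative.eval z) * h1 - B.eval z * h2
  refine ⟨hB, eq_zero_of_eventually_eval_eq_zero (x := z₀) ?_⟩
  filter_upwards [h] with z hz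
  simpa [hB] using hz.symm

theorem eq_zero_of_eventually_quadratic (hu : IsLocalLog u p z₀) (hp : p.natDegree ≠ 0)
    {A₀ A₁ A₂ : ℂ[X]}
    (h : ∀ᶠ z in 𝓝 z₀, A₂.eval z * u z ^ 2 + A₁.eval z * u z + A₀.eval z = 0) : A₂ = 0 := by
  by_contra hA₂
  -- Eliminating `u ^ 2` between the relation and its derivative leaves a linear relation, whose
  -- leading coefficient vanishes only if `-A₁ / (2 A₂)` is an antiderivative of `p' / p`.
  have hd := eventually_eq_zero_of_hasDerivAt h <| hu.mono fun z hz =>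
    (((A₂.hasDerivAt z).mul (hz.2.pow 2)).add ((A₁.hasDerivAt z).mul hz.2)).add (A₀.hasDerivAt z)
  have hlin := hu.eq_zero_of_eventually_mul_eq hp
    (B := A₂ * (2 * A₂ * derivative p + p * derivative A₁) - p * derivative A₂ * A₁)
    (A := -(A₂ * (A₁ * derivative p + p * derivative A₀) - p * derivative A₂ * A₀)) <| by
    filter_upwards [h, hd, hu.eventually_eval_ne_zero] with z h1 h2 hz
    simp only [eval_sub, eval_mul, eval_add, eval_neg, eval_ofNat]
    simp only [Pi.pow_apply, Nat.add_one_sub_one, pow_one] at h2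
    field_simp at h2
    linear_combination A₂.eval z * h2 - (p.eval z * A₂.derivative.eval z) * h1
  refine mul_wronskian_ne_derivative_mul_sq hp (B := 2 * A₂) (A := -A₁)
    (mul_ne_zero two_ne_zero hA₂) ?_
  simp only [wronskian, derivative_mul, derivative_neg, derivative_ofNat]
  linear_combination (-2 : ℂ[X]) * hlin.1

end IsLocalLog

noncomputable def localLog (p : ℂ[X]) (z₀ z : ℂ) : ℂ :=
  log (p.eval z / p.eval z₀) + log (p.eval z₀)

section LocalLog

variable {p : ℂ[X]} {z₀ : ℂ}

theorem eventually_eval_div_mem_slitPlane (hp : p.eval z₀ ≠ 0) :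
    ∀ᶠ z in 𝓝 z₀, p.eval z / p.eval z₀ ∈ slitPlane :=
  (p.continuous.continuousAt.div_const _).eventually_mem <|
    isOpen_slitPlane.mem_nhds (by simp [div_self hp])

theorem isLocalLog_localLog (hp : p.eval z₀ ≠ 0) : IsLocalLog (localLog p z₀) p z₀ := by
  filter_upwards [eventually_eval_div_mem_slitPlane hp] with z hz
  refine ⟨?_, ?_⟩
  · rw [localLog, exp_add, exp_log (slitPlane_ne_zero hz), exp_log hp, div_mul_cancel₀ _ hp]
  · have := (((p.hasDerivAt z).div_const (p.eval z₀)).clog hz).add_const (log (p.eval z₀))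
    rwa [div_div_div_cancel_right₀ hp] at this

theorem analyticAt_localLog (hp : p.eval z₀ ≠ 0) : AnalyticAt ℂ (localLog p z₀) z₀ :=
  ((((AnalyticOnNhd.eval_polynomial p) z₀ trivial).div_const).clog
    (by simp [div_self hp])).add analyticAt_const

theorem abs_im_localLog_le (z : ℂ) : |(localLog p z₀ z).im| ≤ 2 * π := by
  rw [localLog, add_im, log_im, log_im]
  linarith [abs_add_le (arg (p.eval z / p.eval z₀)) (arg (p.eval z₀)),
    abs_arg_le_pi (p.eval z / p.eval z₀), abs_arg_le_pi (p.eval z₀)]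

end LocalLog

theorem exists_log_eq_add_int_mul {w ℓ : ℂ} (h : exp ℓ = w) (hℓ : |ℓ.im| ≤ 2 * π) :
    ∃ k ∈ ({-1, 0, 1} : Finset ℤ), log w = ℓ + k * (2 * π * I) := by
  obtain ⟨k, hk⟩ := exp_eq_exp_iff_exists_int.1 (show exp (log w) = exp ℓ by
    rw [exp_log (h ▸ exp_ne_zero ℓ), h])
  refine ⟨k, ?_, hk⟩
  have him : arg w = ℓ.im + k * (2 * π) := by simpa [log_im] using congrArg im hk
  have hℓ' := abs_le.1 hℓ
  have h1 : (k : ℝ) < 2 := by nlinarith [arg_le_pi w, neg_pi_lt_arg w, Real.pi_pos]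
  have h2 : (-2 : ℝ) < k := by nlinarith [arg_le_pi w, neg_pi_lt_arg w, Real.pi_pos]
  have : -2 < k ∧ k < 2 := ⟨by exact_mod_cast h2, by exact_mod_cast h1⟩
  simp only [Finset.mem_insert, Finset.mem_singleton]
  omega

section Relation

variable {P Q R : ℂ[X]} {u v : ℂ → ℂ} {z₀ c : ℂ}

theorem eventually_relation_of_exp_mul_mul_eq (hu : IsLocalLog u Q z₀) (hv : IsLocalLog v P z₀)
    (h : ∀ᶠ z in 𝓝 z₀, exp (R.eval z * u z) * v z = c) :
    ∀ᶠ z in 𝓝 z₀, (Q * P * derivative R).eval z * u z * v z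
      + (P * R * derivative Q).eval z * v z + (Q * derivative P).eval z = 0 := by
  have hd := eventually_eq_zero_of_hasDerivAt (h.mono fun z hz => sub_eq_zero.2 hz) <|
    (hu.and hv).mono fun z hz => ((((R.hasDerivAt z).mul hz.1.2).cexp).mul hz.2.2).sub_const c
  filter_upwards [hd, hu.eventually_eval_ne_zero, hv.eventually_eval_ne_zero] with z hz hQ hP
  have hE := exp_ne_zero (R.eval z * u z)
  simp only [Pi.mul_apply] at hz
  field_simp at hz
  rw [mul_zero] at hz
  simp only [eval_mul]
  linear_combination (mul_eq_zero.1 hz).resolve_left hE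

theorem IsLocalLog.not_eventually_mul_add_mul_eq (hu : IsLocalLog u Q z₀) (hv : IsLocalLog v P z₀)
    (hQ : Q.natDegree ≠ 0) (hP : P.natDegree ≠ 0) {A B E : ℂ[X]} (hA : A ≠ 0) :
    ¬∀ᶠ z in 𝓝 z₀, A.eval z * u z * v z + B.eval z * v z + E.eval z = 0 := by
  intro h
  -- With `w = A u + B`, multiplying the derivative of `v w = -E` by `w` gives a quadratic in `u`
  -- with leading coefficient `Q P' A ^ 2`.
  have hd := eventually_eq_zero_of_hasDerivAt h <| (hu.and hv).mono fun z hz =>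
    ((((A.hasDerivAt z).mul hz.1.2).mul hz.2.2).add ((B.hasDerivAt z).mul hz.2.2)).add
      (E.hasDerivAt z)
  refine mul_ne_zero (mul_ne_zero (ne_zero_of_natDegree_gt (Nat.pos_of_ne_zero hQ))
    (pow_ne_zero 2 hA)) (mt derivative_eq_zero.1 hP) <| hu.eq_zero_of_eventually_quadratic hQ
    (A₁ := 2 * Q * A * B * derivative P + P * Q * derivative E * A - P * Q * derivative A * E)
    (A₀ := Q * B ^ 2 * derivative P + P * Q * derivative E * B
      - (P * A * derivative Q + P * Q * derivative B) * E) ?_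
  filter_upwards [h, hd, hu.eventually_eval_ne_zero, hv.eventually_eval_ne_zero]
    with z h1 h2 hQz hPz
  simp only [eval_sub, eval_mul, eval_add, eval_pow, eval_ofNat]
  simp only [Pi.mul_apply] at h2
  field_simp at h2
  linear_combination (A.eval z * u z + B.eval z) * h2
    - (P.eval z * Q.eval z * A.derivative.eval z * u z + P.eval z * A.eval z * Q.derivative.eval z
      + P.eval z * Q.eval z * B.derivative.eval z) * h1

theorem not_eventually_exp_mul_mul_eq (hu : IsLocalLog u Q z₀) (hv : IsLocalLog v P z₀)
    (hP1 : P ≠ 1) (hR : R ≠ 0) (hPQ : P.natDegree ≠ 0 ∨ Q.natDegree ≠ 0) :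
    ¬∀ᶠ z in 𝓝 z₀, exp (R.eval z * u z) * v z = c := by
  intro h
  have hrel := eventually_relation_of_exp_mul_mul_eq hu hv h
  by_cases hP' : derivative P = 0
  · have hQ : Q.natDegree ≠ 0 := hPQ.resolve_left (not_not.2 (derivative_eq_zero.1 hP'))
    have hc : c ≠ 0 := by
      rintro rfl
      refine hP1 (sub_eq_zero.1 (eq_zero_of_eventually_eval_eq_zero (x := z₀) ?_))
      filter_upwards [h, hv] with z hz hvz
      rw [mul_eq_zero, or_iff_right (exp_ne_zero _)] at hz
      simp [← hvz.1, hz]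
    obtain ⟨-, hRQ⟩ := hu.eq_zero_of_eventually_mul_eq hQ (B := Q * derivative R)
      (A := -(R * derivative Q)) <| by
      filter_upwards [hrel, h, hv.eventually_eval_ne_zero] with z hz hvc hPz
      have hvz : v z ≠ 0 := by rintro h0; rw [h0, mul_zero] at hvc; exact hc hvc.symm
      simp only [hP', eval_mul, eval_zero, mul_zero, add_zero] at hz
      simp only [eval_mul, eval_neg]
      refine mul_left_cancel₀ (mul_ne_zero hPz hvz) ?_
      linear_combination hz
    exact mul_ne_zero hR (mt derivative_eq_zero.1 hQ) (neg_eq_zero.1 hRQ)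
  have hP : P.natDegree ≠ 0 := mt derivative_eq_zero.2 hP'
  have hQ0 : Q ≠ 0 := by
    rintro rfl
    obtain ⟨z, hz⟩ := hu.eventually_eval_ne_zero.exists
    exact hz eval_zero
  by_cases hQR : derivative Q = 0 ∨ derivative R = 0
  · -- `u` is constant near `z₀` or `R' = 0`, so the relation is linear in `v`
    have hu' : ∀ᶠ z in 𝓝 z₀, (Q * P * derivative R).eval z * u z
        = (Q * P * derivative R * C (u z₀)).eval z := by
      rcases hQR with hQ' | hR'
      · filter_upwards [hu.eventually_eq_of_derivative_eq_zero hQ'] with z hz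
        simp [hz]
      · simp [hR']
    obtain ⟨-, hE⟩ := hv.eq_zero_of_eventually_mul_eq hP
      (B := Q * P * derivative R * C (u z₀) + P * R * derivative Q)
      (A := -(Q * derivative P)) <| by
      filter_upwards [hrel, hu'] with z hz hz'
      simp only [eval_add, eval_neg]
      linear_combination hz - v z * hz'
    exact mul_ne_zero hQ0 hP' (neg_eq_zero.1 hE)
  obtain ⟨hQ', hR'⟩ := not_or.1 hQR
  have hP0 : P ≠ 0 := ne_zero_of_natDegree_gt (Nat.pos_of_ne_zero hP)
  exact hu.not_eventually_mul_add_mul_eq hv (mt derivative_eq_zero.2 hQ') hP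
    (mul_ne_zero (mul_ne_zero hQ0 hP0) hR') hrel

end Relation

theorem not_frequently_cpow_mul_log_eq {P Q R : ℂ[X]} (hP1 : P ≠ 1) (hR : R ≠ 0)
    (hPQ : P.natDegree ≠ 0 ∨ Q.natDegree ≠ 0) {z₀ : ℂ} (hP : P.eval z₀ ≠ 0)
    (hQ : Q.eval z₀ ≠ 0) (c : ℂ) :
    ¬∃ᶠ z in 𝓝[≠] z₀, Q.eval z ^ R.eval z * log (P.eval z) = c := by
  intro hfreq
  let branch : ℤ × ℤ → ℂ → ℂ := fun mk z =>
    exp ((localLog Q z₀ z + mk.1 * (2 * π * I)) * R.eval z) *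
      (localLog P z₀ z + mk.2 * (2 * π * I))
  have hbranch : ∃ᶠ z in 𝓝[≠] z₀, ∃ mk ∈ ({-1, 0, 1} ×ˢ {-1, 0, 1} : Finset (ℤ × ℤ)),
      branch mk z = c := by
    refine (hfreq.and_eventually (nhdsWithin_le_nhds
      ((isLocalLog_localLog hP).and (isLocalLog_localLog hQ)))).mono ?_
    rintro z ⟨hz, ⟨hPz, -⟩, ⟨hQz, -⟩⟩
    obtain ⟨k, hk, hlogP⟩ := exists_log_eq_add_int_mul hPz (abs_im_localLog_le z)
    obtain ⟨m, hm, hlogQ⟩ := exists_log_eq_add_int_mul hQz (abs_im_localLog_le z)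
    refine ⟨(m, k), Finset.mem_product.2 ⟨hm, hk⟩, ?_⟩
    rw [← hz, cpow_def_of_ne_zero (hQz ▸ exp_ne_zero _), hlogP, hlogQ]
  obtain ⟨⟨m, k⟩, -, hmk⟩ := (Finset.frequently_exists _).1 hbranch
  have han : AnalyticAt ℂ (branch (m, k)) z₀ :=
    ((((analyticAt_localLog hQ).add analyticAt_const).mul
      ((AnalyticOnNhd.eval_polynomial R) z₀ trivial)).cexp).mul
      ((analyticAt_localLog hP).add analyticAt_const)
  refine not_eventually_exp_mul_mul_eq ((isLocalLog_localLog hQ).add_int_mul_two_pi_I m)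
    ((isLocalLog_localLog hP).add_int_mul_two_pi_I k) hP1 hR hPQ (c := c) ?_
  filter_upwards [(han.frequently_eq_iff_eventually_eq analyticAt_const).1 hmk] with z hz
  rw [← hz, mul_comm (R.eval z)]

theorem htilde_eq_eval_map (P Q R : ℤ[X]) (z : ℂ) :
    htilde P Q R z = (Q.map (algebraMap ℤ ℂ)).eval z ^ (R.map (algebraMap ℤ ℂ)).eval z
      * log ((P.map (algebraMap ℤ ℂ)).eval z) := by
  simp only [htilde, eval_map_algebraMap]

theorem isOpen_omegaSet (P Q R : ℤ[X]) : IsOpen (OmegaSet P Q R) :=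
  (isOpen_ne_fun (by fun_prop) continuous_const).inter
    (isOpen_ne_fun (by fun_prop) continuous_const)

theorem omegaSet_nonempty {P Q R : ℤ[X]} (hP0 : P ≠ 0) (hQ0 : Q ≠ 0) (hR : R ≠ 0)
    (hP1 : P ≠ 1) :
    (OmegaSet P Q R).Nonempty := by
  obtain ⟨z, hz⟩ : ∃ z : ℂ, aeval z (P * Q * R * (P - 1)) ≠ 0 := by
    by_contra! h
    refine mul_ne_zero (mul_ne_zero (mul_ne_zero hP0 hQ0) hR) (sub_ne_zero.2 hP1)
      ((Polynomial.map_eq_zero_iff (algebraMap ℤ ℂ).injective_int).1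
        (Polynomial.funext fun z => ?_))
    rw [eval_map_algebraMap, eval_zero]
    exact h z
  simp only [map_mul, map_sub, map_one, mul_ne_zero_iff, sub_ne_zero] at hz
  exact ⟨z, mul_ne_zero (mul_ne_zero hz.1.1.1 hz.1.1.2) hz.1.2, hz.2⟩

theorem not_frequently_htilde_eq {P Q R : ℤ[X]} (hP1 : P ≠ 1) (hR : R ≠ 0)
    (hPQ : P.natDegree = 0 → Q.natDegree ≠ 0) {z₀ : ℂ} (hz₀ : z₀ ∈ OmegaSet P Q R) (c : ℂ) :
    ¬∃ᶠ z in 𝓝[≠] z₀, htilde P Q R z = c := by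
  have hinj := (algebraMap ℤ ℂ).injective_int
  simp only [htilde_eq_eval_map]
  refine not_frequently_cpow_mul_log_eq ?_ ((Polynomial.map_ne_zero_iff hinj).2 hR) ?_ ?_ ?_ c
  · exact fun h => hP1 (map_injective _ hinj (h.trans (Polynomial.map_one _).symm))
  · rw [natDegree_map_eq_of_injective hinj, natDegree_map_eq_of_injective hinj]
    exact or_iff_not_imp_left.2 fun h => hPQ (not_not.1 h)
  · rw [eval_map_algebraMap]
    exact left_ne_zero_of_mul (left_ne_zero_of_mul hz₀.1)
  · rw [eval_map_algebraMap]
    exact right_ne_zero_of_mul (left_ne_zero_of_mul hz₀.1)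

theorem htilde_nonconstant_and_no_accPt
    (P Q R : Polynomial ℤ) (hPQR : ZAdmissible P Q R) (hR : R ≠ 0) :
    (¬ ∃ c : ℂ, ∀ z ∈ OmegaSet P Q R, htilde P Q R z = c) ∧
    ∀ γ : ℂ, ∀ z₀ ∈ OmegaSet P Q R,
      ¬ AccPt z₀ (Filter.principal
        {z : ℂ | z ∈ OmegaSet P Q R ∧ htilde P Q R z = Complex.log γ}) := by
  obtain ⟨hP0, hQ0, hP1, hPQ, -, -⟩ := hPQR
  have hlevel z₀ (hz₀ : z₀ ∈ OmegaSet P Q R) c :=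
    not_frequently_htilde_eq hP1 hR (fun h => (hPQ h).1) hz₀ c
  refine ⟨fun ⟨c, hc⟩ => ?_, fun γ z₀ hz₀ hacc => ?_⟩
  · obtain ⟨z₀, hz₀⟩ := omegaSet_nonempty hP0 hQ0 hR hP1
    exact hlevel z₀ hz₀ c (eventually_nhdsWithin_of_eventually_nhds
      (((isOpen_omegaSet P Q R).eventually_mem hz₀).mono hc)).frequently
  · exact hlevel z₀ hz₀ _ ((accPt_iff_frequently_nhdsNE.1 hacc).mono fun z hz => hz.2)
end
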